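/- Let x ∈ ℂ and suppose that no reflection of the form w ↦ i^k·conj(w) with k ∈ {0,1,2,3} belongs to OC(x+Γ). Let z ∈ ℤ[i] with z and conj(z) coprime in ℤ[i], and let ε₁ ∈ {1, −1, i, −i}. If the reflection w ↦ ε₁·(z/conj(z))·conj(w) belongs to OC(x+Γ), then for every ε₂ ∈ {1, −1, i, −i} the rotation w ↦ ε₂·(z/conj(z))·w does not belong to SOC(x+Γ). -/

import Mathlib

open Pointwise Complex ComplexConjugate

/-- The square lattice `Γ = ℤ[i]`, i.e. the Gaussian integers viewed as an additive
subgroup of `ℂ`. -/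
noncomputable def Zi : AddSubgroup ℂ :=
  AddMonoidHom.range (GaussianInt.toComplex.toAddMonoidHom)

/-- `f` is (the underlying map of) a surjective real-linear isometry of `ℂ`. -/
def IsLinIso (f : ℂ → ℂ) : Prop := ∃ R : ℂ ≃ₗᵢ[ℝ] ℂ, ⇑R = f

/-- `f` is a rotation of `ℂ`, i.e. multiplication by a complex number of modulus 1. -/
def IsRotation (f : ℂ → ℂ) : Prop := ∃ u : ℂ, ‖u‖ = 1 ∧ ∀ w, f w = u * w

/-- `f` is a reflection of `ℂ`, i.e. `w ↦ u * conj w` for a complex number `u` of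
modulus 1. -/
def IsReflection (f : ℂ → ℂ) : Prop := ∃ u : ℂ, ‖u‖ = 1 ∧ ∀ w, f w = u * conj w

/-- The shifted square lattice `x + Γ` as a subset of `ℂ`. -/
noncomputable def shiftedZi (x : ℂ) : Set ℂ := x +ᵥ (Zi : Set ℂ)

/-- `OC (x+Γ)`: the set of (maps of) surjective real-linear isometries `f` of `ℂ` such
that `(x+Γ) ∩ f(x+Γ)` is a coset `c + Λ`, with `c ∈ x+Γ` and `Λ` a finite-index
additive subgroup of `Γ = ℤ[i]`. -/
noncomputable def OCs (x : ℂ) : Set (ℂ → ℂ) :=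
  {f | IsLinIso f ∧ ∃ c ∈ shiftedZi x, ∃ Λ : AddSubgroup ℂ, Λ ≤ Zi ∧
    Λ.relIndex Zi ≠ 0 ∧ shiftedZi x ∩ (f '' shiftedZi x) = c +ᵥ (Λ : Set ℂ)}

/-- `SOC (x+Γ)`: the rotations among the coincidence isometries of `x + Γ`. -/
noncomputable def SOCs (x : ℂ) : Set (ℂ → ℂ) := {f ∈ OCs x | IsRotation f}

/-! Pick points of `(x+Γ) ∩ f(x+Γ)` for the reflection `f` and for the rotation. Clearing the
denominator `conj z` shows `z * y ∈ Γ` for `y = ε₂ x - ε₁ conj x`; conjugating and multiplying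
by a unit gives `conj z * y ∈ Γ`, so `y ∈ Γ` because `z` and `conj z` are coprime. Hence
`x - ε₁ conj ε₂ conj x ∈ Γ`, so the reflection `w ↦ ε₁ conj ε₂ conj w`, where `ε₁ conj ε₂` is a
power of `i`, maps `x + Γ` onto itself and is a coincidence isometry, which was excluded. -/

lemma mem_Zi {w : ℂ} : w ∈ Zi ↔ ∃ g : GaussianInt, (g : ℂ) = w := Iff.rfl

lemma coe_mem_Zi (g : GaussianInt) : (g : ℂ) ∈ Zi := ⟨g, rfl⟩

lemma mul_mem_Zi {v w : ℂ} (hv : v ∈ Zi) (hw : w ∈ Zi) : v * w ∈ Zi := by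
  obtain ⟨a, rfl⟩ := mem_Zi.1 hv
  obtain ⟨b, rfl⟩ := mem_Zi.1 hw
  exact ⟨a * b, GaussianInt.toComplex_mul a b⟩

lemma conj_mem_Zi {w : ℂ} (hw : w ∈ Zi) : conj w ∈ Zi := by
  obtain ⟨a, rfl⟩ := mem_Zi.1 hw
  exact ⟨star a, GaussianInt.toComplex_star a⟩

lemma I_mem_Zi : I ∈ Zi := ⟨⟨0, 1⟩, by simp [GaussianInt.toComplex_def']⟩

lemma I_pow_mem_Zi (k : ℕ) : I ^ k ∈ Zi := by
  induction k with
  | zero => simpa using coe_mem_Zi 1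
  | succ k ih => rw [pow_succ]; exact mul_mem_Zi ih I_mem_Zi

lemma mem_Zi_of_isCoprime {a b : GaussianInt} (hab : IsCoprime a b) {w : ℂ}
    (ha : (a : ℂ) * w ∈ Zi) (hb : (b : ℂ) * w ∈ Zi) : w ∈ Zi := by
  obtain ⟨c, d, hcd⟩ := hab
  have hcdC : (c : ℂ) * a + d * b = 1 := by
    simpa using congrArg GaussianInt.toComplex hcd
  have hw : w = c * (a * w) + d * (b * w) := by linear_combination -w * hcdC
  rw [hw]
  exact Zi.add_mem (mul_mem_Zi (coe_mem_Zi c) ha) (mul_mem_Zi (coe_mem_Zi d) hb)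

lemma mem_shiftedZi {x w : ℂ} : w ∈ shiftedZi x ↔ w - x ∈ Zi := by
  rw [shiftedZi, Set.mem_vadd_set_iff_neg_vadd_mem, vadd_eq_add, neg_add_eq_sub]
  rfl

lemma self_mem_shiftedZi (x : ℂ) : x ∈ shiftedZi x := by
  simp [mem_shiftedZi, Zi.zero_mem]

lemma exists_I_pow_eq {ε : ℂ} (hε : ε ∈ ({1, -1, I, -I} : Set ℂ)) : ∃ k : ℕ, I ^ k = ε := by
  rcases hε with rfl | rfl | rfl | rfl
  · exact ⟨0, pow_zero I⟩
  · exact ⟨2, I_sq⟩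
  · exact ⟨1, pow_one I⟩
  · exact ⟨3, I_pow_three⟩

lemma exists_lt_four_I_pow_eq_mul_conj (m n : ℕ) :
    ∃ k < 4, I ^ k = I ^ m * conj (I ^ n) := by
  refine ⟨(m + 3 * n) % 4, Nat.mod_lt _ (by norm_num), ?_⟩
  rw [← pow_eq_pow_mod _ I_pow_four, map_pow, conj_I, ← I_pow_three, ← pow_mul, pow_add]

lemma I_pow_mul_conj (k : ℕ) : I ^ k * conj (I ^ k) = 1 := by
  rw [mul_conj', norm_pow, norm_I]
  simp

lemma exists_mem_shiftedZi_of_mem_OCs {x : ℂ} {f : ℂ → ℂ} (hf : f ∈ OCs x) :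
    ∃ w ∈ shiftedZi x, f w ∈ shiftedZi x := by
  obtain ⟨-, c, -, Λ, -, -, heq⟩ := hf
  have hc : c ∈ shiftedZi x ∩ f '' shiftedZi x := heq ▸ ⟨0, Λ.zero_mem, add_zero c⟩
  obtain ⟨hc, w, hw, rfl⟩ := hc
  exact ⟨w, hw, hc⟩

lemma mem_OCs_of_image_eq {x : ℂ} {f : ℂ → ℂ} (hf : IsLinIso f)
    (himage : f '' shiftedZi x = shiftedZi x) : f ∈ OCs x :=
  ⟨hf, x, self_mem_shiftedZi x, Zi, le_rfl, by simp [AddSubgroup.relIndex_self],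
    by rw [himage, Set.inter_self]; rfl⟩

lemma isLinIso_reflection {u : ℂ} (hu : ‖u‖ = 1) : IsLinIso (fun w => u * conj w) :=
  ⟨conjLIE.trans (rotation ⟨u, mem_sphere_zero_iff_norm.2 hu⟩), rfl⟩

lemma reflection_image_shiftedZi {x u : ℂ} (hu : u ∈ Zi) (hu1 : ‖u‖ = 1)
    (hx : x - u * conj x ∈ Zi) : (fun w => u * conj w) '' shiftedZi x = shiftedZi x := by
  have hmaps : Set.MapsTo (fun w => u * conj w) (shiftedZi x) (shiftedZi x) := by
    intro w hw
    rw [mem_shiftedZi] at hw ⊢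
    have : u * conj w - x = u * conj (w - x) - (x - u * conj x) := by
      rw [map_sub]; ring
    rw [this]
    exact Zi.sub_mem (mul_mem_Zi hu (conj_mem_Zi hw)) hx
  refine hmaps.image_subset.antisymm fun w hw => ⟨u * conj w, hmaps hw, ?_⟩
  simp only [map_mul, conj_conj, ← mul_assoc, mul_conj', hu1]
  simp

lemma mul_sub_mem_Zi_of_mem_shiftedZi {σ : ℂ →+* ℂ} (hσ : ∀ w ∈ Zi, σ w ∈ Zi)
    {x u z w : ℂ} (hu : u ∈ Zi) (hz : z ∈ Zi) (hz0 : conj z ≠ 0)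
    (hw : w ∈ shiftedZi x) (hfw : u * (z / conj z) * σ w ∈ shiftedZi x) :
    u * z * σ x - conj z * x ∈ Zi := by
  rw [mem_shiftedZi] at hw hfw
  have : u * z * σ x - conj z * x =
      conj z * (u * (z / conj z) * σ w - x) - u * z * σ (w - x) := by
    rw [map_sub]; field_simp; ring
  rw [this]
  exact Zi.sub_mem (mul_mem_Zi (conj_mem_Zi hz) hfw) (mul_mem_Zi (mul_mem_Zi hu hz) (hσ _ hw))

lemma I_pow_mul_sub_mem_Zi {z : GaussianInt} (hz : IsCoprime z (star z)) {x : ℂ} {m n : ℕ}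
    (hrot : I ^ n * z * x - conj (z : ℂ) * x ∈ Zi)
    (hrefl : I ^ m * z * conj x - conj (z : ℂ) * x ∈ Zi) :
    I ^ n * x - I ^ m * conj x ∈ Zi := by
  have hzy : (z : ℂ) * (I ^ n * x - I ^ m * conj x) ∈ Zi := by
    convert Zi.sub_mem hrot hrefl using 1; ring
  -- for `y = I ^ n * x - I ^ m * conj x`: `conj y = -conj (I ^ m * I ^ n) * y`,
  -- and `-I ^ m * I ^ n = I ^ (m + n + 2)`
  have hzy' : conj (z : ℂ) * (I ^ n * x - I ^ m * conj x) ∈ Zi := by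
    convert mul_mem_Zi (I_pow_mem_Zi (m + n + 2)) (conj_mem_Zi hzy) using 1
    simp only [map_mul, map_sub, conj_conj, pow_add, I_sq]
    linear_combination
      conj (z : ℂ) * (I ^ m * conj x * I_pow_mul_conj n - I ^ n * x * I_pow_mul_conj m)
  exact mem_Zi_of_isCoprime hz hzy (by rwa [GaussianInt.toComplex_star])

lemma reflection_mem_OCs {x u : ℂ} (hu : u ∈ Zi) (hu1 : ‖u‖ = 1) (hx : x - u * conj x ∈ Zi) :
    (fun w => u * conj w) ∈ OCs x :=
  mem_OCs_of_image_eq (isLinIso_reflection hu1) (reflection_image_shiftedZi hu hu1 hx)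

theorem rotation_not_mem_SOC_of_reflection_mem_OC (x : ℂ)
    (hnoref : ∀ k : ℕ, k < 4 → (fun w => I ^ k * conj w) ∉ OCs x)
    (z : GaussianInt) (hcop : IsCoprime z (star z))
    (ε₁ : ℂ) (hε₁ : ε₁ ∈ ({1, -1, I, -I} : Set ℂ))
    (h : (fun w => ε₁ * ((z : ℂ) / conj (z : ℂ)) * conj w) ∈ OCs x) :
    ∀ ε₂ ∈ ({1, -1, I, -I} : Set ℂ),
      (fun w => ε₂ * ((z : ℂ) / conj (z : ℂ)) * w) ∉ SOCs x := by
  intro ε₂ hε₂ hrot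
  obtain ⟨m, rfl⟩ := exists_I_pow_eq hε₁
  obtain ⟨n, rfl⟩ := exists_I_pow_eq hε₂
  have hz0 : conj (z : ℂ) ≠ 0 := by
    rintro hz
    rw [map_eq_zero, GaussianInt.toComplex_eq_zero] at hz
    subst hz
    exact not_isCoprime_zero_zero (by simpa using hcop)
  obtain ⟨w₁, hw₁, hfw₁⟩ := exists_mem_shiftedZi_of_mem_OCs h
  obtain ⟨w₂, hw₂, hfw₂⟩ := exists_mem_shiftedZi_of_mem_OCs hrot.1
  have hy := I_pow_mul_sub_mem_Zi hcop
    (mul_sub_mem_Zi_of_mem_shiftedZi (σ := RingHom.id ℂ) (fun _ => id) (I_pow_mem_Zi n)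
      (coe_mem_Zi z) hz0 hw₂ hfw₂)
    (mul_sub_mem_Zi_of_mem_shiftedZi (σ := starRingEnd ℂ) (fun _ => conj_mem_Zi) (I_pow_mem_Zi m)
      (coe_mem_Zi z) hz0 hw₁ hfw₁)
  obtain ⟨k, hk, hkI⟩ := exists_lt_four_I_pow_eq_mul_conj m n
  refine hnoref k hk (reflection_mem_OCs (I_pow_mem_Zi k) (by simp) ?_)
  convert mul_mem_Zi (conj_mem_Zi (I_pow_mem_Zi n)) hy using 1
  rw [hkI]
  linear_combination (-x) * I_pow_mul_conj n
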